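/- arXiv:2511.12012 — 4 statements merged into one kernel-verified Lean document; each statement's English description precedes it below -/
import Mathlib

section
/- Duhamel representation: let n be a finite type, J ∈ Matrix n n ℂ a fixed matrix, F : ℝ → Matrix n n ℂ continuous, and ρ : ℝ → Matrix n n ℂ a function such that for every t, ρ has derivative J·ρ(t) + ρ(t)·Jᴴ + F(t) at t. Then for all real τ and t, ρ(t) = exp((t-τ)J) · ρ(τ) · (exp((t-τ)J))ᴴ + ∫_τ^t exp((t-s)J) · F(s) · (exp((t-s)J))ᴴ ds. -/
open Matrix NormedSpace intervalIntegral

set_option linter.unusedSectionVars false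

section aux
variable {n : Type*} [Fintype n] [DecidableEq n]

section linfty
attribute [local instance] Matrix.linftyOpNormedRing Matrix.linftyOpNormedAlgebra

theorem aux_exp_deriv (J : Matrix n n ℂ) (i j : n) (s : ℝ) :
    HasDerivAt (fun u : ℝ => exp (u • J) i j) ((J * exp (s • J)) i j) s := by
  have h1 : HasDerivAt (fun u : ℝ => exp (u • J)) (J * exp (s • J)) s := by
    have := hasDerivAt_exp_smul_const' (𝕂 := ℝ) J s
    exact this
  let e : Matrix n n ℂ →L[ℝ] ℂ :=
    LinearMap.toContinuousLinearMap
      ((LinearMap.proj j).comp (LinearMap.proj (R := ℝ) (φ := fun _ : n => n → ℂ) i))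
  exact (e.hasFDerivAt.comp_hasDerivAt s h1 : )

theorem aux_exp_mul_comm (J : Matrix n n ℂ) (s : ℝ) :
    J * exp (s • J) = exp (s • J) * J :=
  ((Commute.refl J).smul_right s).exp_right

theorem aux_exp_add (J : Matrix n n ℂ) (a b : ℝ) :
    exp ((a + b) • J) = exp (a • J) * exp (b • J) := by
  rw [add_smul]
  exact exp_add_of_commute (((Commute.refl J).smul_left a).smul_right b)

end linfty

theorem aux_exp_conjT (J : Matrix n n ℂ) (s : ℝ) :
    (exp (s • J))ᴴ = exp (s • Jᴴ) := by
  rw [← Matrix.exp_conjTranspose]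
  congr 1
  rw [conjTranspose_smul_non_comm]
  · simp
  · intros; simp [Complex.ext_iff, mul_comm]

attribute [local instance] Matrix.normedAddCommGroup Matrix.normedSpace

theorem hasDerivAt_matrix {f : ℝ → Matrix n n ℂ} {A : Matrix n n ℂ} {x : ℝ} :
    HasDerivAt f A x ↔ ∀ i j, HasDerivAt (fun t => f t i j) (A i j) x := by
  constructor
  · intro h i j
    exact hasDerivAt_pi.mp ((hasDerivAt_pi (φ := f)).mp h i) j
  · intro h
    exact hasDerivAt_pi.mpr fun i => hasDerivAt_pi.mpr fun j => h i j

theorem HasDerivAt.matrix_mul {f g : ℝ → Matrix n n ℂ} {A B : Matrix n n ℂ} {x : ℝ}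
    (hf : HasDerivAt f A x) (hg : HasDerivAt g B x) :
    HasDerivAt (fun s => f s * g s) (A * g x + f x * B) x := by
  rw [hasDerivAt_matrix] at hf hg ⊢
  intro i j
  have h : HasDerivAt (fun s => ∑ k, f s i k * g s k j)
      (∑ k, (A i k * g x k j + f x i k * B k j)) x :=
    HasDerivAt.fun_sum fun k _ => (hf i k).mul (hg k j)
  simpa only [mul_apply, Matrix.add_apply, Finset.sum_add_distrib] using h

theorem HasDerivAt.matrix_conjTranspose {f : ℝ → Matrix n n ℂ} {A : Matrix n n ℂ} {x : ℝ}
    (hf : HasDerivAt f A x) : HasDerivAt (fun s => (f s)ᴴ) Aᴴ x := by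
  rw [hasDerivAt_matrix] at hf ⊢
  intro i j
  have := Complex.conjCLE.toContinuousLinearMap.hasFDerivAt.comp_hasDerivAt x (hf j i)
  simpa only [conjTranspose_apply, Function.comp_def, ContinuousLinearEquiv.coe_coe,
    Complex.conjCLE_apply, RCLike.star_def] using this

theorem continuous_matrix_of {f : ℝ → Matrix n n ℂ}
    (h : ∀ i j, Continuous fun s => f s i j) : Continuous f :=
  continuous_pi fun i => continuous_pi fun j => h i j

theorem continuous_entry_of {f : ℝ → Matrix n n ℂ} (h : Continuous f) (i j : n) :
    Continuous fun s => f s i j :=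
  (continuous_apply j).comp ((continuous_apply i).comp h)

end aux

attribute [local instance] Matrix.normedAddCommGroup Matrix.normedSpace

theorem duhamel_representation {n : Type*} [Fintype n] [DecidableEq n]
    (J : Matrix n n ℂ) (F ρ : ℝ → Matrix n n ℂ)
    (hF : Continuous F)
    (hρ : ∀ t : ℝ, HasDerivAt ρ (J * ρ t + ρ t * Jᴴ + F t) t)
    (τ t : ℝ) :
    ρ t = NormedSpace.exp ((t - τ) • J) * ρ τ * (NormedSpace.exp ((t - τ) • J))ᴴ
      + ∫ s in τ..t,
          NormedSpace.exp ((t - s) • J) * F s * (NormedSpace.exp ((t - s) • J))ᴴ := by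
  haveI : CompleteSpace (Matrix n n ℂ) := FiniteDimensional.complete ℝ _
  set B : ℝ → Matrix n n ℂ := fun s => exp (s • J) with hBdef
  set C : ℝ → Matrix n n ℂ := fun s => exp (s • Jᴴ) with hCdef
  -- derivatives of B and C
  have hB : ∀ s, HasDerivAt B (J * B s) s := fun s =>
    hasDerivAt_matrix.mpr fun i j => aux_exp_deriv J i j s
  have hC : ∀ s, HasDerivAt C (Jᴴ * C s) s := fun s =>
    hasDerivAt_matrix.mpr fun i j => aux_exp_deriv Jᴴ i j s
  have hBneg : ∀ s, HasDerivAt (fun u => B (-u)) (-(J * B (-s))) s := by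
    intro s
    have := (hB (-s)).scomp s (hasDerivAt_neg s)
    simp only [Function.comp_def, neg_smul, one_smul] at this; exact this
  have hCneg : ∀ s, HasDerivAt (fun u => C (-u)) (-(Jᴴ * C (-s))) s := by
    intro s
    have := (hC (-s)).scomp s (hasDerivAt_neg s)
    simp only [Function.comp_def, neg_smul, one_smul] at this; exact this
  -- u and its derivative
  set u : ℝ → Matrix n n ℂ := fun s => B (-s) * (ρ s * C (-s)) with hudef
  set G : ℝ → Matrix n n ℂ := fun s => B (-s) * F s * C (-s) with hGdef
  have hu : ∀ s, HasDerivAt u (G s) s := by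
    intro s
    have h1 : HasDerivAt (fun w => ρ w * C (-w))
        ((J * ρ s + ρ s * Jᴴ + F s) * C (-s) + ρ s * -(Jᴴ * C (-s))) s :=
      (hρ s).matrix_mul (hCneg s)
    have h2 := (hBneg s).matrix_mul h1
    have hc : J * B (-s) = B (-s) * J := aux_exp_mul_comm J (-s)
    convert h2 using 1
    simp only [hGdef, mul_add, add_mul, neg_mul, mul_neg, mul_assoc, hc]
    abel
  -- continuity of G
  have hGcont : Continuous G := by
    apply continuous_matrix_of
    intro i j
    have hBc : ∀ (M : Matrix n n ℂ) (k l : n), Continuous fun s : ℝ => exp (s • M) k l :=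
      fun M k l => continuous_iff_continuousAt.mpr fun s => (aux_exp_deriv M k l s).continuousAt
    have : ∀ s : ℝ, G s i j = ∑ l, (∑ k, B (-s) i k * F s k l) * C (-s) l j := by
      intro s; simp [hGdef, mul_apply]
    simp only [this]
    refine continuous_finset_sum _ fun l _ => Continuous.mul ?_ ?_
    · exact continuous_finset_sum _ fun k _ =>
        ((hBc J i k).comp continuous_neg).mul (continuous_entry_of hF k l)
    · exact (hBc Jᴴ l j).comp continuous_neg
  -- FTC
  have hint := hGcont.intervalIntegrable (μ := MeasureTheory.volume) τ t
  have hftc : ∫ s in τ..t, G s = u t - u τ :=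
    integral_eq_sub_of_hasDerivAt (fun s _ => hu s) hint
  -- group laws
  have hBadd : ∀ a b : ℝ, B a * B b = B (a + b) := fun a b => (aux_exp_add J a b).symm
  have hCadd : ∀ a b : ℝ, C a * C b = C (a + b) := fun a b => (aux_exp_add Jᴴ a b).symm
  have hB0 : B 0 = 1 := by simp [hBdef, exp_zero]
  have hC0 : C 0 = 1 := by simp [hCdef, exp_zero]
  -- recover ρ t
  have hρt : ρ t = B t * u t * C t := by
    simp only [hudef]
    rw [← mul_assoc, ← mul_assoc, hBadd, add_neg_cancel, hB0, one_mul, mul_assoc, hCadd,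
      neg_add_cancel, hC0, mul_one]
  -- push constants through the integral
  let φlin : Matrix n n ℂ →ₗ[ℝ] Matrix n n ℂ :=
    (LinearMap.mulLeft ℝ (B t)).comp (LinearMap.mulRight ℝ (C t))
  let φ : Matrix n n ℂ →L[ℝ] Matrix n n ℂ := LinearMap.toContinuousLinearMap φlin
  have hφ : ∀ X, φ X = B t * X * C t := fun X => by
    simp [φ, φlin, LinearMap.mulLeft, LinearMap.mulRight, mul_assoc]
  have hcomm : B t * (∫ s in τ..t, G s) * C t = ∫ s in τ..t, B t * G s * C t := by
    have := (φ.intervalIntegral_comp_comm hint).symm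
    exact (hφ _).symm.trans (this.trans (intervalIntegral.integral_congr fun s _ => hφ (G s)))
  have hint2 : ∀ s, B t * G s * C t = B (t - s) * F s * C (t - s) := by
    intro s
    calc B t * G s * C t = B t * (B (-s) * (F s * (C (-s) * C t))) := by
          simp only [hGdef, mul_assoc]
      _ = B (t + -s) * (F s * C (-s + t)) := by rw [← mul_assoc, hBadd, hCadd]
      _ = B (t - s) * F s * C (t - s) := by
          rw [← mul_assoc, neg_add_eq_sub, ← sub_eq_add_neg]
  have hCconj : ∀ a : ℝ, C a = (B a)ᴴ := fun a => (aux_exp_conjT J a).symm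
  calc ρ t = B t * u t * C t := hρt
    _ = B t * (u τ + ∫ s in τ..t, G s) * C t := by
        rw [hftc]; congr 2; abel
    _ = B t * u τ * C t + B t * (∫ s in τ..t, G s) * C t := by
        rw [mul_add, add_mul]
    _ = B (t - τ) * ρ τ * C (t - τ) + ∫ s in τ..t, B (t - s) * F s * C (t - s) := by
        rw [hcomm]
        congr 1
        · calc B t * u τ * C t = B t * (B (-τ) * (ρ τ * (C (-τ) * C t))) := by
                simp only [hudef, mul_assoc]
            _ = B (t + -τ) * (ρ τ * C (-τ + t)) := by rw [← mul_assoc, hBadd, hCadd]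
            _ = B (t - τ) * ρ τ * C (t - τ) := by
                rw [← mul_assoc, neg_add_eq_sub, ← sub_eq_add_neg]
        · exact intervalIntegral.integral_congr fun s _ => hint2 s
    _ = _ := by simp only [hCconj]; rfl
end

section
/- Unconditional stability of the fourth-order implicit (2,2)-Padé flow: let ω ∈ ℝ, T > 0, Δt ≥ 0, α_J := -iω - 1/(2T), and d := 1/√3 - i. Then |(1 + i·(Δt/4)·d·α_J)·(1 - i·(Δt/4)·conj(d)·α_J)| ≤ |(1 + i·(Δt/4)·conj(d)·α_J)·(1 - i·(Δt/4)·d·α_J)|; hence the amplification factor γ₁,₁ := ((1 + i(Δt/4)dα_J)(1 - i(Δt/4)conj(d)α_J)) / ((1 + i(Δt/4)conj(d)α_J)(1 - i(Δt/4)dα_J)) satisfies |γ₁,₁| ≤ 1 for every step size Δt ≥ 0. -/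
lemma pade_key (z w : ℂ) (habs : ‖z‖ = ‖w‖) (hre : z.re ≤ w.re) :
    ‖(1 + z) * (1 - w)‖ ≤ ‖(1 + w) * (1 - z)‖ := by
  have hn : Complex.normSq z = Complex.normSq w := by
    have := congrArg (· ^ 2) habs
    simpa [Complex.sq_norm] using this
  rw [Complex.norm_def, Complex.norm_def]
  apply Real.sqrt_le_sqrt
  have hid : Complex.normSq ((1 + w) * (1 - z)) - Complex.normSq ((1 + z) * (1 - w))
      = 4 * (w.re - z.re) * (1 + Complex.normSq z) := by
    simp only [Complex.normSq_apply, Complex.mul_re, Complex.mul_im, Complex.add_re,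
      Complex.add_im, Complex.sub_re, Complex.sub_im, Complex.one_re, Complex.one_im] at hn ⊢
    linear_combination (4*z.re) * hn
  have hpos : 0 ≤ 4 * (w.re - z.re) * (1 + Complex.normSq z) := by
    have := Complex.normSq_nonneg z
    have := sub_nonneg.mpr hre
    positivity
  linarith

theorem fourth_order_pade_unconditional_stability (ω T Δt : ℝ)
    (hT : 0 < T) (hΔt : 0 ≤ Δt) (αJ d γ : ℂ)
    (hαJ : αJ = -Complex.I * (ω : ℂ) - 1/(2*(T:ℂ)))
    (hd : d = 1/(Real.sqrt 3 : ℂ) - Complex.I)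
    (hγ : γ = ((1 + Complex.I * ((Δt : ℂ)/4) * d * αJ)
              * (1 - Complex.I * ((Δt : ℂ)/4) * (starRingEnd ℂ) d * αJ))
            / ((1 + Complex.I * ((Δt : ℂ)/4) * (starRingEnd ℂ) d * αJ)
              * (1 - Complex.I * ((Δt : ℂ)/4) * d * αJ))) :
    ‖((1 + Complex.I * ((Δt : ℂ)/4) * d * αJ)
        * (1 - Complex.I * ((Δt : ℂ)/4) * (starRingEnd ℂ) d * αJ))‖
      ≤ ‖((1 + Complex.I * ((Δt : ℂ)/4) * (starRingEnd ℂ) d * αJ)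
        * (1 - Complex.I * ((Δt : ℂ)/4) * d * αJ))‖ ∧
    ‖γ‖ ≤ 1 := by
  set z := Complex.I * ((Δt : ℂ)/4) * d * αJ with hz
  set w := Complex.I * ((Δt : ℂ)/4) * (starRingEnd ℂ) d * αJ with hw
  have hs : (0:ℝ) < Real.sqrt 3 := Real.sqrt_pos.mpr (by norm_num)
  have habs : ‖z‖ = ‖w‖ := by
    simp [hz, hw, map_mul, Complex.norm_conj]
  have hre : z.re ≤ w.re := by
    have hT' : T ≠ 0 := ne_of_gt hT
    have hrez : z.re = (Δt/4) * ((1/Real.sqrt 3) * ω - 1/(2*T)) := by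
      rw [hz, hαJ, hd]
      simp [Complex.mul_re, Complex.mul_im, Complex.div_re, Complex.div_im,
        Complex.normSq, Complex.ofReal_re, Complex.ofReal_im]
      field_simp
      linear_combination (2*Δt*T*ω) * Real.sq_sqrt (by norm_num : (0:ℝ) ≤ 3)
    have hrew : w.re = (Δt/4) * ((1/Real.sqrt 3) * ω + 1/(2*T)) := by
      rw [hw, hαJ, hd]
      simp [Complex.mul_re, Complex.mul_im, Complex.div_re, Complex.div_im,
        Complex.normSq, Complex.ofReal_re, Complex.ofReal_im]
      field_simp
      linear_combination (2*Δt*T*ω) * Real.sq_sqrt (by norm_num : (0:ℝ) ≤ 3)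
    rw [hrez, hrew]
    have : (0:ℝ) < 1/(2*T) := by positivity
    nlinarith
  have h1 : ‖(1 + z) * (1 - w)‖ ≤ ‖(1 + w) * (1 - z)‖ :=
    pade_key z w habs hre
  refine ⟨h1, ?_⟩
  rw [hγ, norm_div]
  rcases eq_or_ne ‖(1 + w) * (1 - z)‖ 0 with h0 | h0
  · simp only [h0, div_zero, zero_le_one]
  · rw [div_le_one (lt_of_le_of_ne (norm_nonneg _) (Ne.symm h0))]
    exact h1
end

section
/- Let J ∈ ℝ and γ ≥ 0, and let ρ : ℝ → Matrix (Fin 4) (Fin 4) ℂ be defined by ρ(t)₀₀ = 1 - e^{-γt}, ρ(t)₁₁ = (e^{-γt}/2)(1 - cos 2Jt), ρ(t)₁₂ = -(i e^{-γt}/2) sin 2Jt, ρ(t)₂₁ = (i e^{-γt}/2) sin 2Jt, ρ(t)₂₂ = (e^{-γt}/2)(1 + cos 2Jt), and all other entries zero. Then for every t ≥ 0, ρ(t) is positive semidefinite and trace(ρ(t)) = 1; i.e., ρ(t) is a valid density matrix for all t ≥ 0. -/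
/-!
In the basis `|00⟩, |01⟩, |10⟩, |11⟩` (indices `0, …, 3`),
`ρ(t) = (1 - e^{-γt}) |00⟩⟨00| + e^{-γt} |ψ(Jt)⟩⟨ψ(Jt)|`, where
`ψ(Jt) = -i sin Jt |01⟩ + cos Jt |10⟩ = e^{-iHt} |10⟩` is the coherently evolved initial state:
the half-angle formulas turn the entries `(1 ∓ cos 2Jt)/2` and `sin 2Jt / 2` into `sin² Jt`,
`cos² Jt` and `sin Jt cos Jt`. For `γ, t ≥ 0` both weights are nonnegative, so `ρ(t)` is a
nonnegative combination of rank-one projectors.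
-/

open Matrix
open scoped ComplexOrder

noncomputable def lindbladSolution (J γ t : ℝ) : Matrix (Fin 4) (Fin 4) ℂ :=
  !![((1 - Real.exp (-(γ*t)) : ℝ) : ℂ), 0, 0, 0;
     0, ((Real.exp (-(γ*t)) / 2 * (1 - Real.cos (2*J*t)) : ℝ) : ℂ),
        -(Complex.I * ((Real.exp (-(γ*t)) / 2 * Real.sin (2*J*t) : ℝ) : ℂ)), 0;
     0, Complex.I * ((Real.exp (-(γ*t)) / 2 * Real.sin (2*J*t) : ℝ) : ℂ),
        ((Real.exp (-(γ*t)) / 2 * (1 + Real.cos (2*J*t)) : ℝ) : ℂ), 0;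
     0, 0, 0, 0]

noncomputable def hoppingState (θ : ℝ) : Fin 4 → ℂ :=
  ![0, -(Complex.I * Real.sin θ), Real.cos θ, 0]

theorem lindbladSolution_eq_mixture (J γ t : ℝ) :
    lindbladSolution J γ t =
      (1 - Real.exp (-(γ*t))) • vecMulVec ![1, 0, 0, 0] (star ![1, 0, 0, 0]) +
      Real.exp (-(γ*t)) • vecMulVec (hoppingState (J*t)) (star (hoppingState (J*t))) := by
  have one_sub_cos : 1 - Real.cos (2*J*t) = 2 * Real.sin (J*t) ^ 2 := by
    rw [mul_assoc, Real.cos_two_mul, Real.cos_sq']; ring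
  have one_add_cos : 1 + Real.cos (2*J*t) = 2 * Real.cos (J*t) ^ 2 := by
    rw [mul_assoc, Real.cos_two_mul]; ring
  have sin_two_mul : Real.sin (2*J*t) = 2 * Real.sin (J*t) * Real.cos (J*t) := by
    rw [mul_assoc, Real.sin_two_mul]
  rw [lindbladSolution, hoppingState, one_sub_cos, one_add_cos, sin_two_mul]
  generalize Real.exp (-(γ*t)) = e
  generalize Real.sin (J*t) = s, Real.cos (J*t) = c
  ext i j
  fin_cases i <;> fin_cases j <;>
    simp only [Matrix.add_apply, Matrix.smul_apply, vecMulVec_apply] <;>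
    simp [Complex.ext_iff, sq] <;> ring

theorem lindbladSolution_posSemidef {J γ t : ℝ} (hγ : 0 ≤ γ) (ht : 0 ≤ t) :
    (lindbladSolution J γ t).PosSemidef := by
  have decay_le_one : Real.exp (-(γ*t)) ≤ 1 := Real.exp_le_one_iff.2 (by nlinarith)
  rw [lindbladSolution_eq_mixture]
  exact ((posSemidef_vecMulVec_self_star _).smul (sub_nonneg.2 decay_le_one)).add
    ((posSemidef_vecMulVec_self_star _).smul (Real.exp_pos _).le)

theorem trace_lindbladSolution (J γ t : ℝ) : (lindbladSolution J γ t).trace = 1 := by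
  simp [lindbladSolution, trace, Fin.sum_univ_four]
  ring

theorem two_qubit_solution_is_density_matrix (J γ : ℝ) (hγ : 0 ≤ γ)
    (ρ : ℝ → Matrix (Fin 4) (Fin 4) ℂ)
    (hρ : ρ = fun t =>
      !![((1 - Real.exp (-(γ*t)) : ℝ) : ℂ), 0, 0, 0;
         0, ((Real.exp (-(γ*t)) / 2 * (1 - Real.cos (2*J*t)) : ℝ) : ℂ),
            -(Complex.I * ((Real.exp (-(γ*t)) / 2 * Real.sin (2*J*t) : ℝ) : ℂ)), 0;
         0, Complex.I * ((Real.exp (-(γ*t)) / 2 * Real.sin (2*J*t) : ℝ) : ℂ),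
            ((Real.exp (-(γ*t)) / 2 * (1 + Real.cos (2*J*t)) : ℝ) : ℂ), 0;
         0, 0, 0, 0]) :
    ∀ t : ℝ, 0 ≤ t → (ρ t).PosSemidef ∧ Matrix.trace (ρ t) = 1 := by
  intro t ht
  subst hρ
  exact ⟨lindbladSolution_posSemidef hγ ht, trace_lindbladSolution J γ t⟩
end

section
/- Stability condition for the first-order scheme with decay and dephasing: let Δt > 0, T₂ > 0 and α ∈ ℂ. Then the two conditions |α| ≤ 1 and ((Δt + T₂)/T₂)·|α|² ≤ 1 hold simultaneously if and only if |α| ≤ √(T₂/(Δt + T₂)). Consequently, all eigenvalues 1, conj(α), α, ((Δt + T₂)/T₂)|α|² of the first-order amplification matrix have modulus at most 1 exactly when |α| ≤ √(T₂/(Δt + T₂)); in particular this condition is strictly stronger than |α| ≤ 1, so the implicit first-order scheme is no longer unconditionally stable in the presence of dephasing. -/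
theorem first_order_stability_decay_dephasing (Δt T₂ : ℝ)
    (hΔt : 0 < Δt) (hT₂ : 0 < T₂) (α : ℂ) :
    ((‖α‖ ≤ 1 ∧ ((Δt + T₂)/T₂) * ‖α‖ ^ 2 ≤ 1) ↔
      ‖α‖ ≤ Real.sqrt (T₂/(Δt + T₂))) ∧
    ((∀ μ ∈ ({1, (starRingEnd ℂ) α, α,
          ((((Δt + T₂)/T₂) * ‖α‖ ^ 2 : ℝ) : ℂ)} : Set ℂ),
        ‖μ‖ ≤ 1) ↔ ‖α‖ ≤ Real.sqrt (T₂/(Δt + T₂))) ∧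
    Real.sqrt (T₂/(Δt + T₂)) < 1 := by
  set a := ‖α‖ with ha
  have ha0 : 0 ≤ a := norm_nonneg α
  have hsum : 0 < Δt + T₂ := by linarith
  have hr0 : 0 < T₂/(Δt + T₂) := div_pos hT₂ hsum
  have hr1 : T₂/(Δt + T₂) < 1 := by
    rw [div_lt_one hsum]; linarith
  have hslt : Real.sqrt (T₂/(Δt + T₂)) < 1 := by
    rw [show (1:ℝ) = Real.sqrt 1 from (Real.sqrt_one).symm]
    exact Real.sqrt_lt_sqrt (le_of_lt hr0) hr1
  have key : ((Δt + T₂)/T₂) * a ^ 2 ≤ 1 ↔ a ≤ Real.sqrt (T₂/(Δt + T₂)) := by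
    rw [Real.le_sqrt ha0 hr0.le]
    constructor
    · intro h
      rw [le_div_iff₀ hsum]
      have h' := mul_le_mul_of_nonneg_right h hT₂.le
      have he : (Δt + T₂)/T₂ * a ^ 2 * T₂ = a ^ 2 * (Δt + T₂) := by
        field_simp
      rw [he] at h'
      linarith
    · intro h
      have h2 : a ^ 2 ≤ T₂/(Δt + T₂) := h
      calc ((Δt + T₂)/T₂) * a ^ 2 ≤ ((Δt + T₂)/T₂) * (T₂/(Δt + T₂)) := by
            apply mul_le_mul_of_nonneg_left h2 (by positivity)
        _ = 1 := by field_simp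
  have iff1 : (a ≤ 1 ∧ ((Δt + T₂)/T₂) * a ^ 2 ≤ 1) ↔ a ≤ Real.sqrt (T₂/(Δt + T₂)) := by
    constructor
    · intro ⟨_, h2⟩; exact key.mp h2
    · intro h; exact ⟨le_trans h (le_of_lt hslt), key.mpr h⟩
  refine ⟨iff1, ?_, hslt⟩
  constructor
  · intro hμ
    have hc := hμ ((((Δt + T₂)/T₂) * a ^ 2 : ℝ) : ℂ) (by simp [Set.mem_insert_iff])
    rw [Complex.norm_real, Real.norm_eq_abs, abs_of_nonneg (by positivity)] at hc
    exact key.mp hc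
  · intro h μ hμ
    have h1 : a ≤ 1 := le_trans h (le_of_lt hslt)
    simp only [Set.mem_insert_iff, Set.mem_singleton_iff] at hμ
    rcases hμ with rfl | rfl | rfl | rfl
    · simp
    · simpa using h1
    · exact h1
    · rw [Complex.norm_real, Real.norm_eq_abs, abs_of_nonneg (by positivity)]
      exact key.mpr h
end
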